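/- Assume λ > 0 and μ > 0, and let (A^(ℓ), B^(ℓ)) be an alternating minimization sequence for F_{λ,μ}. Then all accumulation points of the sequence achieve the same value of F_{λ,μ}, and the successive differences converge to zero: (A^(ℓ+1), B^(ℓ+1)) − (A^(ℓ), B^(ℓ)) → 0 as ℓ → ∞. -/

import Mathlib

open Matrix Kronecker

/-- Spectral norm (ℓ²→ℓ² operator norm) of a real matrix. -/
noncomputable def specNorm {p q : Type*} [Fintype p] [Fintype q] [DecidableEq q]
    (S : Matrix p q ℝ) : ℝ :=
  ‖LinearMap.toContinuousLinearMap (Matrix.toEuclideanLin S)‖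

/-- Frobenius norm of a real matrix. -/
noncomputable def frobNorm {p q : Type*} [Fintype p] [Fintype q] (S : Matrix p q ℝ) : ℝ :=
  Real.sqrt (∑ i, ∑ j, (S i j) ^ 2)

/-- The regularized cost function
`F_{λ,μ}(A,B) = ‖T − ∑ⱼ Aⱼ ⊗ Bⱼ‖₂ + λ ∑ⱼ ‖Aⱼ‖_F² + μ ∑ⱼ ‖Bⱼ‖_F²`. -/
noncomputable def F (m n k : ℕ) (T : Matrix (Fin m × Fin n) (Fin m × Fin n) ℝ)
    (lam mu : ℝ) (A : Fin k → Matrix (Fin m) (Fin m) ℝ)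
    (B : Fin k → Matrix (Fin n) (Fin n) ℝ) : ℝ :=
  specNorm (T - ∑ j, (A j) ⊗ₖ (B j)) + lam * ∑ j, frobNorm (A j) ^ 2
    + mu * ∑ j, frobNorm (B j) ^ 2


/-!
For fixed `B`, the map `A ↦ F(A, B)` is a convex function (the spectral norm of an affine map)
plus `λ ‖A‖²`, with `‖A‖² = ∑ⱼ ‖Aⱼ‖_F²` obeying the parallelogram law. Comparing the value at a
minimizer `A` with the value at the midpoint of `A` and any `A₀` gives quadratic growth,
`F(A₀, B) - F(A, B) ≥ λ/2 ‖A - A₀‖²`, and symmetrically in `B`. Hence each half-step of the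
alternating scheme decreases `F` by at least `λ/2 ‖ΔA‖²`, resp. `μ/2 ‖ΔB‖²`. The values
`F(A⁽ˡ⁾, B⁽ˡ⁾)` are nonincreasing and nonnegative, so they converge to some `L`; their successive
differences tend to zero, forcing `ΔA, ΔB → 0`, and by continuity of `F` every accumulation point
has value `L`.
-/

open Filter Topology Set

section Frobenius

variable {ι p q : Type*} [Fintype ι] [Fintype p] [Fintype q]

lemma frobNorm_sq (S : Matrix p q ℝ) : frobNorm S ^ 2 = ∑ i, ∑ j, S i j ^ 2 :=
  Real.sq_sqrt (by positivity)

lemma sq_apply_le_frobNorm_sq (S : Matrix p q ℝ) (i : p) (j : q) : S i j ^ 2 ≤ frobNorm S ^ 2 := by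
  rw [frobNorm_sq]
  exact (Finset.single_le_sum (fun j _ => sq_nonneg (S i j)) (Finset.mem_univ j)).trans
    (Finset.single_le_sum (f := fun i => ∑ j, S i j ^ 2) (fun i _ => by positivity)
      (Finset.mem_univ i))

lemma sum_frobNorm_sq_midpoint (X Y : ι → Matrix p q ℝ) :
    ∑ j, frobNorm (((1 / 2 : ℝ) • X + (1 / 2 : ℝ) • Y) j) ^ 2 =
      (∑ j, frobNorm (X j) ^ 2 + ∑ j, frobNorm (Y j) ^ 2) / 2
        - (∑ j, frobNorm ((X - Y) j) ^ 2) / 4 := by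
  simp only [frobNorm_sq, Finset.sum_div, ← Finset.sum_add_distrib, ← Finset.sum_sub_distrib]
  refine Finset.sum_congr rfl fun j _ => Finset.sum_congr rfl fun i _ =>
    Finset.sum_congr rfl fun i' _ => ?_
  simp only [Pi.add_apply, Pi.sub_apply, Pi.smul_apply, Matrix.add_apply, Matrix.sub_apply,
    Matrix.smul_apply, smul_eq_mul]
  ring

lemma tendsto_zero_of_sum_frobNorm_sq {α : Type*} {l : Filter α} {X : α → ι → Matrix p q ℝ}
    (h : Tendsto (fun a => ∑ j, frobNorm (X a j) ^ 2) l (𝓝 0)) : Tendsto X l (𝓝 0) := by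
  refine tendsto_pi_nhds.2 fun j => tendsto_pi_nhds.2 fun i => tendsto_pi_nhds.2 fun i' => ?_
  have hsqrt : Tendsto (fun a => √(∑ j, frobNorm (X a j) ^ 2)) l (𝓝 0) := by
    simpa using h.sqrt
  refine squeeze_zero_norm (fun a => Real.abs_le_sqrt ?_) hsqrt
  exact (sq_apply_le_frobNorm_sq _ i i').trans
    (Finset.single_le_sum (f := fun j => frobNorm (X a j) ^ 2) (fun j _ => sq_nonneg _)
      (Finset.mem_univ j))

end Frobenius

section SpectralNorm

variable {p q : Type*} [Fintype p] [Fintype q] [DecidableEq q]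

/-- `specNorm S` is by definition the operator norm of `matrixToCLM S`. -/
noncomputable def matrixToCLM :
    Matrix p q ℝ ≃ₗ[ℝ] (EuclideanSpace ℝ q →L[ℝ] EuclideanSpace ℝ p) :=
  Matrix.toEuclideanLin.trans
    (LinearMap.toContinuousLinearMap : (EuclideanSpace ℝ q →ₗ[ℝ] EuclideanSpace ℝ p) ≃ₗ[ℝ] _)

@[fun_prop]
lemma continuous_specNorm : Continuous (specNorm : Matrix p q ℝ → ℝ) :=
  (matrixToCLM (p := p) (q := q)).toLinearMap.continuous_of_finiteDimensional.norm

lemma convexOn_specNorm : ConvexOn ℝ univ (specNorm : Matrix p q ℝ → ℝ) :=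
  (convexOn_norm convex_univ).comp_linearMap
    (matrixToCLM (p := p) (q := q)).toLinearMap

lemma convexOn_specNorm_sub {E : Type*} [AddCommGroup E] [Module ℝ E] (T : Matrix p q ℝ)
    (L : E →ₗ[ℝ] Matrix p q ℝ) : ConvexOn ℝ univ fun x => specNorm (T - L x) :=
  convexOn_specNorm.comp_affineMap (AffineMap.const ℝ E T - L.toAffineMap)

end SpectralNorm

lemma ConvexOn.quadratic_growth_of_forall_le {E : Type*} [AddCommGroup E] [Module ℝ E]
    {h q : E → ℝ} (hh : ConvexOn ℝ univ h)
    (hq : ∀ x y, q ((1 / 2 : ℝ) • x + (1 / 2 : ℝ) • y) = (q x + q y) / 2 - q (x - y) / 4)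
    {c : ℝ} {y : E} (hy : ∀ z, h y + c * q y ≤ h z + c * q z) (x : E) :
    c / 2 * q (y - x) ≤ h x + c * q x - (h y + c * q y) := by
  have hmid := hy ((1 / 2 : ℝ) • y + (1 / 2 : ℝ) • x)
  have hconv := hh.2 (mem_univ y) (mem_univ x) (by norm_num : (0 : ℝ) ≤ 1 / 2)
    (by norm_num : (0 : ℝ) ≤ 1 / 2) (by norm_num)
  rw [hq] at hmid
  simp only [smul_eq_mul] at hconv
  linarith

lemma tendsto_zero_of_mul_le_sub_succ {f u : ℕ → ℝ} {c L : ℝ} (hc : 0 < c) (hu : ∀ ℓ, 0 ≤ u ℓ)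
    (hf : Tendsto f atTop (𝓝 L)) (h : ∀ ℓ, c * u ℓ ≤ f ℓ - f (ℓ + 1)) :
    Tendsto u atTop (𝓝 0) := by
  have hdiff : Tendsto (fun ℓ => (f ℓ - f (ℓ + 1)) / c) atTop (𝓝 0) := by
    simpa using (hf.sub (hf.comp (tendsto_add_atTop_nat 1))).div_const c
  exact squeeze_zero hu (fun ℓ => (le_div_iff₀' hc).2 (h ℓ)) hdiff

section Kronecker

variable {ι m m' n n' : Type*} [Fintype ι] [Fintype m] [Fintype m'] [Fintype n] [Fintype n']
  [DecidableEq m'] [DecidableEq n'] (T : Matrix (m × n) (m' × n') ℝ)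

lemma convexOn_specNorm_sub_sum_kronecker_left (B : ι → Matrix n n' ℝ) :
    ConvexOn ℝ univ fun A : ι → Matrix m m' ℝ => specNorm (T - ∑ j, A j ⊗ₖ B j) := by
  refine (convexOn_specNorm_sub T
    (∑ j, ((kroneckerBilinear (R := ℝ) (α := ℝ)).flip (B j)).comp (LinearMap.proj j))).congr
    fun A _ => ?_
  simp [LinearMap.sum_apply, kroneckerBilinear, kroneckerMapBilinear_apply_apply]

lemma convexOn_specNorm_sub_sum_kronecker_right (A : ι → Matrix m m' ℝ) :
    ConvexOn ℝ univ fun B : ι → Matrix n n' ℝ => specNorm (T - ∑ j, A j ⊗ₖ B j) := by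
  refine (convexOn_specNorm_sub T
    (∑ j, (kroneckerBilinear (R := ℝ) (α := ℝ) (A j)).comp (LinearMap.proj j))).congr
    fun B _ => ?_
  simp [LinearMap.sum_apply, kroneckerBilinear, kroneckerMapBilinear_apply_apply]

end Kronecker

section CostFunction

variable {m n k : ℕ} (T : Matrix (Fin m × Fin n) (Fin m × Fin n) ℝ) {lam mu : ℝ}

lemma F_nonneg (hlam : 0 ≤ lam) (hmu : 0 ≤ mu) (A : Fin k → Matrix (Fin m) (Fin m) ℝ)
    (B : Fin k → Matrix (Fin n) (Fin n) ℝ) : 0 ≤ F m n k T lam mu A B :=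
  add_nonneg (add_nonneg (norm_nonneg _) (by positivity)) (by positivity)

lemma continuous_F : Continuous fun P : (Fin k → Matrix (Fin m) (Fin m) ℝ) ×
    (Fin k → Matrix (Fin n) (Fin n) ℝ) => F m n k T lam mu P.1 P.2 := by
  have hkron : Continuous fun P : (Fin k → Matrix (Fin m) (Fin m) ℝ) ×
      (Fin k → Matrix (Fin n) (Fin n) ℝ) => ∑ j, P.1 j ⊗ₖ P.2 j :=
    continuous_finsetSum _ fun j _ => continuous_matrix fun ⟨_, _⟩ ⟨_, _⟩ => by
      simp only [kronecker_apply]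
      fun_prop
  unfold F frobNorm
  fun_prop

lemma F_quadratic_growth_left {A : Fin k → Matrix (Fin m) (Fin m) ℝ}
    {B : Fin k → Matrix (Fin n) (Fin n) ℝ}
    (hA : ∀ A', F m n k T lam mu A B ≤ F m n k T lam mu A' B)
    (A₀ : Fin k → Matrix (Fin m) (Fin m) ℝ) :
    lam / 2 * ∑ j, frobNorm ((A - A₀) j) ^ 2 ≤ F m n k T lam mu A₀ B - F m n k T lam mu A B := by
  unfold F at hA ⊢
  rw [add_sub_add_right_eq_sub]
  exact ConvexOn.quadratic_growth_of_forall_le (E := Fin k → Matrix (Fin m) (Fin m) ℝ)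
    (convexOn_specNorm_sub_sum_kronecker_left T B) (q := fun X => ∑ j, frobNorm (X j) ^ 2)
    sum_frobNorm_sq_midpoint (fun A' => le_of_add_le_add_right (hA A')) A₀

lemma F_quadratic_growth_right {A : Fin k → Matrix (Fin m) (Fin m) ℝ}
    {B : Fin k → Matrix (Fin n) (Fin n) ℝ}
    (hB : ∀ B', F m n k T lam mu A B ≤ F m n k T lam mu A B')
    (B₀ : Fin k → Matrix (Fin n) (Fin n) ℝ) :
    mu / 2 * ∑ j, frobNorm ((B - B₀) j) ^ 2 ≤ F m n k T lam mu A B₀ - F m n k T lam mu A B := by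
  unfold F at hB ⊢
  simp only [add_right_comm _ (lam * _)] at hB ⊢
  rw [add_sub_add_right_eq_sub]
  exact ConvexOn.quadratic_growth_of_forall_le (E := Fin k → Matrix (Fin n) (Fin n) ℝ)
    (convexOn_specNorm_sub_sum_kronecker_right T A) (q := fun X => ∑ j, frobNorm (X j) ^ 2)
    sum_frobNorm_sq_midpoint (fun B' => le_of_add_le_add_right (hB B')) B₀

end CostFunction

theorem accumulation_points_same_value_and_successive_differences_tendsto_zero_general
    (m n k : ℕ)
    (T : Matrix (Fin m × Fin n) (Fin m × Fin n) ℝ)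
    (lam mu : ℝ) (hlam : 0 < lam) (hmu : 0 < mu)
    (A : ℕ → Fin k → Matrix (Fin m) (Fin m) ℝ)
    (B : ℕ → Fin k → Matrix (Fin n) (Fin n) ℝ)
    (hA : ∀ ℓ, ∀ A' : Fin k → Matrix (Fin m) (Fin m) ℝ,
      F m n k T lam mu (A (ℓ + 1)) (B ℓ) ≤ F m n k T lam mu A' (B ℓ))
    (hB : ∀ ℓ, ∀ B' : Fin k → Matrix (Fin n) (Fin n) ℝ,
      F m n k T lam mu (A (ℓ + 1)) (B (ℓ + 1)) ≤ F m n k T lam mu (A (ℓ + 1)) B') :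
    (∀ (A₁ B₁ A₂ B₂) (φ₁ φ₂ : ℕ → ℕ), StrictMono φ₁ → StrictMono φ₂ →
      Filter.Tendsto (fun ℓ => (A (φ₁ ℓ), B (φ₁ ℓ))) Filter.atTop (nhds (A₁, B₁)) →
      Filter.Tendsto (fun ℓ => (A (φ₂ ℓ), B (φ₂ ℓ))) Filter.atTop (nhds (A₂, B₂)) →
      F m n k T lam mu A₁ B₁ = F m n k T lam mu A₂ B₂) ∧
    Filter.Tendsto (fun ℓ => (A (ℓ + 1) - A ℓ, B (ℓ + 1) - B ℓ)) Filter.atTop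
      (nhds (0, 0)) := by
  set f : ℕ → ℝ := fun ℓ => F m n k T lam mu (A ℓ) (B ℓ)
  have hdecA (ℓ : ℕ) : lam / 2 * ∑ j, frobNorm ((A (ℓ + 1) - A ℓ) j) ^ 2 ≤ f ℓ - f (ℓ + 1) :=
    (F_quadratic_growth_left T (hA ℓ) (A ℓ)).trans (sub_le_sub_left (hB ℓ (B ℓ)) _)
  have hdecB (ℓ : ℕ) : mu / 2 * ∑ j, frobNorm ((B (ℓ + 1) - B ℓ) j) ^ 2 ≤ f ℓ - f (ℓ + 1) :=
    (F_quadratic_growth_right T (hB ℓ) (B ℓ)).trans (sub_le_sub_right (hA ℓ (A ℓ)) _)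
  have hf : Tendsto f atTop (𝓝 (⨅ ℓ, f ℓ)) :=
    tendsto_atTop_ciInf (antitone_nat_of_succ_le fun ℓ => (hB ℓ (B ℓ)).trans (hA ℓ (A ℓ)))
      ⟨0, by rintro _ ⟨ℓ, rfl⟩; exact F_nonneg T hlam.le hmu.le _ _⟩
  have hvalue (P : _ × _) (φ : ℕ → ℕ) (hφ : StrictMono φ)
      (hP : Tendsto (fun ℓ => (A (φ ℓ), B (φ ℓ))) atTop (𝓝 P)) :
      F m n k T lam mu P.1 P.2 = ⨅ ℓ, f ℓ :=
    tendsto_nhds_unique (((continuous_F T).tendsto P).comp hP) (hf.comp hφ.tendsto_atTop)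
  refine ⟨fun A₁ B₁ A₂ B₂ φ₁ φ₂ hφ₁ hφ₂ h₁ h₂ =>
    (hvalue (A₁, B₁) φ₁ hφ₁ h₁).trans (hvalue (A₂, B₂) φ₂ hφ₂ h₂).symm, ?_⟩
  exact (tendsto_zero_of_sum_frobNorm_sq (tendsto_zero_of_mul_le_sub_succ (by positivity)
    (fun _ => by positivity) hf hdecA)).prodMk_nhds
    (tendsto_zero_of_sum_frobNorm_sq (tendsto_zero_of_mul_le_sub_succ (by positivity)
      (fun _ => by positivity) hf hdecB))

/-- For `λ, μ > 0`, all accumulation points of an alternating minimization sequence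
for `F_{λ,μ}` achieve the same function value, and successive differences tend to zero. -/
theorem accumulation_points_same_value_and_successive_differences_tendsto_zero
    (m n k : ℕ) (hm : 0 < m) (hn : 0 < n) (hk : 0 < k)
    (T : Matrix (Fin m × Fin n) (Fin m × Fin n) ℝ)
    (lam mu : ℝ) (hlam : 0 < lam) (hmu : 0 < mu)
    (A : ℕ → Fin k → Matrix (Fin m) (Fin m) ℝ)
    (B : ℕ → Fin k → Matrix (Fin n) (Fin n) ℝ)
    (hA : ∀ ℓ, ∀ A' : Fin k → Matrix (Fin m) (Fin m) ℝ,
      F m n k T lam mu (A (ℓ + 1)) (B ℓ) ≤ F m n k T lam mu A' (B ℓ))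
    (hB : ∀ ℓ, ∀ B' : Fin k → Matrix (Fin n) (Fin n) ℝ,
      F m n k T lam mu (A (ℓ + 1)) (B (ℓ + 1)) ≤ F m n k T lam mu (A (ℓ + 1)) B') :
    (∀ (A₁ B₁ A₂ B₂) (φ₁ φ₂ : ℕ → ℕ), StrictMono φ₁ → StrictMono φ₂ →
      Filter.Tendsto (fun ℓ => (A (φ₁ ℓ), B (φ₁ ℓ))) Filter.atTop (nhds (A₁, B₁)) →
      Filter.Tendsto (fun ℓ => (A (φ₂ ℓ), B (φ₂ ℓ))) Filter.atTop (nhds (A₂, B₂)) →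
      F m n k T lam mu A₁ B₁ = F m n k T lam mu A₂ B₂) ∧
    Filter.Tendsto (fun ℓ => (A (ℓ + 1) - A ℓ, B (ℓ + 1) - B ℓ)) Filter.atTop
      (nhds (0, 0)) :=
  accumulation_points_same_value_and_successive_differences_tendsto_zero_general m n k T lam mu hlam
    hmu A B hA hB
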